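/- arXiv:2605.29865 — 4 statements merged into one kernel-verified Lean document; each statement's English description precedes it below -/
import Mathlib

section
/- Let I be a two-sided ideal of a Leibniz algebra g. If I is simple (as a Leibniz algebra) and the quotient g/I is solvable, then g is quasi-Artinian. -/
universe u v

/-- A (left) Leibniz algebra over a field `K`: a `K`-vector space with a bilinear
bracket satisfying the left Leibniz identity. -/
class LeibnizAlgebra (K : Type u) (g : Type v) [Field K] [AddCommGroup g] [Module K g]
    extends Bracket g g where
  add_bracket : ∀ x y z : g, ⁅x + y, z⁆ = ⁅x, z⁆ + ⁅y, z⁆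
  bracket_add : ∀ x y z : g, ⁅x, y + z⁆ = ⁅x, y⁆ + ⁅x, z⁆
  smul_bracket : ∀ (c : K) (x y : g), ⁅c • x, y⁆ = c • ⁅x, y⁆
  bracket_smul : ∀ (c : K) (x y : g), ⁅x, c • y⁆ = c • ⁅x, y⁆
  leibniz : ∀ x y z : g, ⁅x, ⁅y, z⁆⁆ = ⁅⁅x, y⁆, z⁆ + ⁅y, ⁅x, z⁆⁆

namespace Leibniz

section Defs

variable (K : Type u) (g : Type v) [Field K] [AddCommGroup g] [Module K g] [LeibnizAlgebra K g]

lemma zero_bracket (y : g) : ⁅(0 : g), y⁆ = 0 := by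
  have h := LeibnizAlgebra.smul_bracket (0 : K) (0 : g) y
  simpa using h

lemma bracket_zero (y : g) : ⁅y, (0 : g)⁆ = 0 := by
  have h := LeibnizAlgebra.bracket_smul (0 : K) y (0 : g)
  simpa using h

lemma neg_bracket (x y : g) : ⁅-x, y⁆ = -⁅x, y⁆ := by
  have h := LeibnizAlgebra.smul_bracket (-1 : K) x y
  simpa using h

lemma bracket_neg (x y : g) : ⁅x, -y⁆ = -⁅x, y⁆ := by
  have h := LeibnizAlgebra.bracket_smul (-1 : K) x y
  simpa using h

lemma sub_bracket (x x' y : g) : ⁅x - x', y⁆ = ⁅x, y⁆ - ⁅x', y⁆ := by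
  rw [sub_eq_add_neg, LeibnizAlgebra.add_bracket, neg_bracket K, ← sub_eq_add_neg]

lemma bracket_sub (x y y' : g) : ⁅x, y - y'⁆ = ⁅x, y⁆ - ⁅x, y'⁆ := by
  rw [sub_eq_add_neg, LeibnizAlgebra.bracket_add, bracket_neg K, ← sub_eq_add_neg]

/-- A (two-sided) ideal of a Leibniz algebra: a subspace `I` with `⁅g,I⁆ ⊆ I` and
`⁅I,g⁆ ⊆ I`. -/
def IsIdeal (I : Submodule K g) : Prop :=
  ∀ x : g, ∀ a ∈ I, ⁅x, a⁆ ∈ I ∧ ⁅a, x⁆ ∈ I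

/-- The bracket `[A, B]` of two subspaces: the span of all brackets `⁅a, b⁆`. -/
def bk (A B : Submodule K g) : Submodule K g :=
  Submodule.span K {z : g | ∃ a ∈ A, ∃ b ∈ B, z = ⁅a, b⁆}

/-- The derived series of a subspace `I`, computed in `g`:
`I^(0) = I`, `I^(n+1) = [I^(n), I^(n)]`. -/
def subDerived (I : Submodule K g) : ℕ → Submodule K g
  | 0 => I
  | n + 1 => bk K g (subDerived I n) (subDerived I n)

/-- The derived series of `g`: `g^(0) = g`, `g^(n+1) = [g^(n), g^(n)]`. -/
def derived : ℕ → Submodule K g := subDerived K g ⊤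

/-- A Leibniz algebra is solvable if `g^(n) = 0` for some `n`. -/
def IsSolvable : Prop := ∃ n : ℕ, derived K g n = ⊥

/-- A Leibniz algebra is abelian if its bracket is identically zero. -/
def IsAbelian : Prop := ∀ x y : g, ⁅x, y⁆ = 0

/-- A nonzero Leibniz algebra is simple if its only two-sided ideals are `⊥` and `⊤`. -/
def IsSimpleAlg : Prop :=
  (∃ x : g, x ≠ 0) ∧ ∀ I : Submodule K g, IsIdeal K g I → I = ⊥ ∨ I = ⊤

/-- A Leibniz algebra `g` is quasi-Artinian if for every descending chain of ideals
`I_1 ⊇ I_2 ⊇ ⋯` there is `m` with `[g^(m), I_m] ⊆ I_n` and `[I_m, g^(m)] ⊆ I_n` for all `n`. -/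
def QuasiArtinian : Prop :=
  ∀ I : ℕ → Submodule K g, (∀ n, IsIdeal K g (I n)) → (∀ n, I (n + 1) ≤ I n) →
    ∃ m : ℕ, ∀ n : ℕ,
      bk K g (derived K g m) (I m) ≤ I n ∧ bk K g (I m) (derived K g m) ≤ I n

/-- A Leibniz algebra is Artinian if every descending chain of two-sided ideals stabilizes. -/
def ArtinianAlg : Prop :=
  ∀ I : ℕ → Submodule K g, (∀ n, IsIdeal K g (I n)) → (∀ n, I (n + 1) ≤ I n) →
    ∃ m : ℕ, ∀ n : ℕ, m ≤ n → I n = I m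

/-- A solvable ideal: an ideal which is solvable (as a Leibniz algebra). -/
def IsSolvableIdeal (I : Submodule K g) : Prop :=
  IsIdeal K g I ∧ ∃ n : ℕ, subDerived K g I n = ⊥

/-- An abelian ideal: an ideal whose bracket vanishes identically. -/
def IsAbelianIdeal (I : Submodule K g) : Prop :=
  IsIdeal K g I ∧ ∀ x ∈ I, ∀ y ∈ I, ⁅x, y⁆ = (0 : g)

/-- Minimal condition on solvable ideals: every descending chain of solvable
two-sided ideals stabilizes. -/
def MinOnSolvableIdeals : Prop :=
  ∀ I : ℕ → Submodule K g, (∀ n, IsSolvableIdeal K g (I n)) → (∀ n, I (n + 1) ≤ I n) →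
    ∃ m : ℕ, ∀ n : ℕ, m ≤ n → I n = I m

/-- Minimal condition on abelian ideals: every descending chain of abelian
two-sided ideals stabilizes. -/
def MinOnAbelianIdeals : Prop :=
  ∀ I : ℕ → Submodule K g, (∀ n, IsAbelianIdeal K g (I n)) → (∀ n, I (n + 1) ≤ I n) →
    ∃ m : ℕ, ∀ n : ℕ, m ≤ n → I n = I m

/-- `I` is a two-sided ideal of the subalgebra `A` (both viewed as subspaces of `g`). -/
def IsIdealIn (A I : Submodule K g) : Prop :=
  I ≤ A ∧ ∀ x ∈ A, ∀ a ∈ I, ⁅x, a⁆ ∈ I ∧ ⁅a, x⁆ ∈ I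

/-- A prime ideal: a proper two-sided ideal `P` such that `[h₁, h₂] ⊆ P` for ideals
`h₁, h₂` forces `h₁ ⊆ P` or `h₂ ⊆ P`. -/
def IsPrimeIdeal (P : Submodule K g) : Prop :=
  IsIdeal K g P ∧ P ≠ ⊤ ∧
    ∀ h₁ h₂ : Submodule K g, IsIdeal K g h₁ → IsIdeal K g h₂ →
      bk K g h₁ h₂ ≤ P → h₁ ≤ P ∨ h₂ ≤ P

/-- `Leib(g)`: the subspace spanned by all squares `⁅x, x⁆`. -/
def leibIdeal : Submodule K g :=
  Submodule.span K {z : g | ∃ x : g, z = ⁅x, x⁆}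

/-- Given a subspace `C`, the preimage of the center of `g/C`:
all `x` with `⁅x, y⁆ ∈ C` and `⁅y, x⁆ ∈ C` for every `y`. -/
def centerStep (C : Submodule K g) : Submodule K g where
  carrier := {x : g | ∀ y : g, ⁅x, y⁆ ∈ C ∧ ⁅y, x⁆ ∈ C}
  add_mem' := by
    intro a b ha hb
    intro y
    constructor
    · rw [LeibnizAlgebra.add_bracket]; exact C.add_mem (ha y).1 (hb y).1
    · rw [LeibnizAlgebra.bracket_add]; exact C.add_mem (ha y).2 (hb y).2
  zero_mem' := by
    intro y
    constructor
    · rw [zero_bracket K]; exact C.zero_mem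
    · rw [bracket_zero K]; exact C.zero_mem
  smul_mem' := by
    intro c a ha y
    constructor
    · rw [LeibnizAlgebra.smul_bracket]; exact C.smul_mem c (ha y).1
    · rw [LeibnizAlgebra.bracket_smul]; exact C.smul_mem c (ha y).2

/-- The transfinite upper central series of `g`: `ζ_0 = 0`,
`ζ_{α+1}/ζ_α = Z(g/ζ_α)`, and `ζ_ρ = ⋃_{α<ρ} ζ_α` at limit ordinals. -/
noncomputable def zeta : Ordinal.{0} → Submodule K g := fun o =>
  Ordinal.limitRecOn o ⊥ (fun _ C => centerStep K g C)
    (fun o _ ih => ⨆ (a : Ordinal.{0}) (h : a < o), ih a h)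

/-- `g` is hypercentral if `ζ_α(g) = g` for some ordinal `α`. -/
def Hypercentral : Prop := ∃ o : Ordinal.{0}, zeta K g o = ⊤

end Defs

section Quotient

variable {K : Type u} {g : Type v} [Field K] [AddCommGroup g] [Module K g] [LeibnizAlgebra K g]

/-- The bracket induced on the quotient `g ⧸ I` by a two-sided ideal `I`. -/
def quotBracket (I : Submodule K g) (hI : IsIdeal K g I) : g ⧸ I → g ⧸ I → g ⧸ I :=
  Quotient.map₂ (fun x y : g => ⁅x, y⁆) (by
    intro x x' hx y y' hy
    have hx' : x - x' ∈ I := (Submodule.quotientRel_def I).1 hx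
    have hy' : y - y' ∈ I := (Submodule.quotientRel_def I).1 hy
    refine (Submodule.quotientRel_def I).2 ?_
    have key : ⁅x, y⁆ - ⁅x', y'⁆ = ⁅x - x', y⁆ + ⁅x', y - y'⁆ := by
      rw [sub_bracket K, bracket_sub K]
      abel
    rw [key]
    exact I.add_mem (hI y (x - x') hx').2 (hI x' (y - y') hy').1)

@[simp] lemma quotBracket_mk (I : Submodule K g) (hI : IsIdeal K g I) (x y : g) :
    quotBracket I hI (Submodule.Quotient.mk x) (Submodule.Quotient.mk y) =
      Submodule.Quotient.mk ⁅x, y⁆ := rfl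

/-- The quotient Leibniz algebra `g ⧸ I` of `g` by a two-sided ideal `I`. -/
def quotLeibniz (I : Submodule K g) (hI : IsIdeal K g I) : LeibnizAlgebra K (g ⧸ I) where
  bracket := quotBracket I hI
  add_bracket X Y Z := by
    obtain ⟨x, rfl⟩ := Submodule.Quotient.mk_surjective I X
    obtain ⟨y, rfl⟩ := Submodule.Quotient.mk_surjective I Y
    obtain ⟨z, rfl⟩ := Submodule.Quotient.mk_surjective I Z
    show quotBracket I hI (Submodule.Quotient.mk x + Submodule.Quotient.mk y)
        (Submodule.Quotient.mk z) = _
    rw [← Submodule.Quotient.mk_add, quotBracket_mk]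
    show _ = quotBracket I hI (Submodule.Quotient.mk x) (Submodule.Quotient.mk z) +
      quotBracket I hI (Submodule.Quotient.mk y) (Submodule.Quotient.mk z)
    rw [quotBracket_mk, quotBracket_mk, ← Submodule.Quotient.mk_add,
      LeibnizAlgebra.add_bracket]
  bracket_add X Y Z := by
    obtain ⟨x, rfl⟩ := Submodule.Quotient.mk_surjective I X
    obtain ⟨y, rfl⟩ := Submodule.Quotient.mk_surjective I Y
    obtain ⟨z, rfl⟩ := Submodule.Quotient.mk_surjective I Z
    show quotBracket I hI (Submodule.Quotient.mk x)
        (Submodule.Quotient.mk y + Submodule.Quotient.mk z) = _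
    rw [← Submodule.Quotient.mk_add, quotBracket_mk]
    show _ = quotBracket I hI (Submodule.Quotient.mk x) (Submodule.Quotient.mk y) +
      quotBracket I hI (Submodule.Quotient.mk x) (Submodule.Quotient.mk z)
    rw [quotBracket_mk, quotBracket_mk, ← Submodule.Quotient.mk_add,
      LeibnizAlgebra.bracket_add]
  smul_bracket c X Y := by
    obtain ⟨x, rfl⟩ := Submodule.Quotient.mk_surjective I X
    obtain ⟨y, rfl⟩ := Submodule.Quotient.mk_surjective I Y
    show quotBracket I hI (c • Submodule.Quotient.mk x) (Submodule.Quotient.mk y) =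
      c • quotBracket I hI (Submodule.Quotient.mk x) (Submodule.Quotient.mk y)
    rw [← Submodule.Quotient.mk_smul, quotBracket_mk, quotBracket_mk,
      ← Submodule.Quotient.mk_smul, LeibnizAlgebra.smul_bracket]
  bracket_smul c X Y := by
    obtain ⟨x, rfl⟩ := Submodule.Quotient.mk_surjective I X
    obtain ⟨y, rfl⟩ := Submodule.Quotient.mk_surjective I Y
    show quotBracket I hI (Submodule.Quotient.mk x) (c • Submodule.Quotient.mk y) =
      c • quotBracket I hI (Submodule.Quotient.mk x) (Submodule.Quotient.mk y)
    rw [← Submodule.Quotient.mk_smul, quotBracket_mk, quotBracket_mk,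
      ← Submodule.Quotient.mk_smul, LeibnizAlgebra.bracket_smul]
  leibniz X Y Z := by
    obtain ⟨x, rfl⟩ := Submodule.Quotient.mk_surjective I X
    obtain ⟨y, rfl⟩ := Submodule.Quotient.mk_surjective I Y
    obtain ⟨z, rfl⟩ := Submodule.Quotient.mk_surjective I Z
    show quotBracket I hI (Submodule.Quotient.mk x)
        (quotBracket I hI (Submodule.Quotient.mk y) (Submodule.Quotient.mk z)) = _
    rw [quotBracket_mk, quotBracket_mk]
    show _ = quotBracket I hI
        (quotBracket I hI (Submodule.Quotient.mk x) (Submodule.Quotient.mk y))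
        (Submodule.Quotient.mk z) +
      quotBracket I hI (Submodule.Quotient.mk y)
        (quotBracket I hI (Submodule.Quotient.mk x) (Submodule.Quotient.mk z))
    rw [quotBracket_mk, quotBracket_mk, quotBracket_mk, quotBracket_mk,
      ← Submodule.Quotient.mk_add, LeibnizAlgebra.leibniz]

/-- A two-sided ideal of a Leibniz algebra, regarded as a Leibniz algebra itself. -/
def idealLeibniz (I : Submodule K g) (hI : IsIdeal K g I) : LeibnizAlgebra K I where
  bracket a b := ⟨⁅(a : g), (b : g)⁆, (hI (a : g) (b : g) b.2).1⟩
  add_bracket a b c := Subtype.ext (by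
    show ⁅((a + b : I) : g), (c : g)⁆ = ⁅(a : g), (c : g)⁆ + ⁅(b : g), (c : g)⁆
    rw [Submodule.coe_add, LeibnizAlgebra.add_bracket])
  bracket_add a b c := Subtype.ext (by
    show ⁅(a : g), ((b + c : I) : g)⁆ = ⁅(a : g), (b : g)⁆ + ⁅(a : g), (c : g)⁆
    rw [Submodule.coe_add, LeibnizAlgebra.bracket_add])
  smul_bracket c a b := Subtype.ext (by
    show ⁅((c • a : I) : g), (b : g)⁆ = c • ⁅(a : g), (b : g)⁆
    rw [Submodule.coe_smul, LeibnizAlgebra.smul_bracket])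
  bracket_smul c a b := Subtype.ext (by
    show ⁅(a : g), ((c • b : I) : g)⁆ = c • ⁅(a : g), (b : g)⁆
    rw [Submodule.coe_smul, LeibnizAlgebra.bracket_smul])
  leibniz a b c := Subtype.ext (by
    show ⁅(a : g), ⁅(b : g), (c : g)⁆⁆ =
      ⁅⁅(a : g), (b : g)⁆, (c : g)⁆ + ⁅(b : g), ⁅(a : g), (c : g)⁆⁆
    exact LeibnizAlgebra.leibniz (a : g) (b : g) (c : g))

end Quotient

section Constructions

variable {K : Type u} [Field K]

/-- The direct sum of two Leibniz algebras, with componentwise bracket. -/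
instance prodLeibniz (g₁ : Type v) (g₂ : Type v) [AddCommGroup g₁] [Module K g₁]
    [LeibnizAlgebra K g₁] [AddCommGroup g₂] [Module K g₂] [LeibnizAlgebra K g₂] :
    LeibnizAlgebra K (g₁ × g₂) where
  bracket x y := (⁅x.1, y.1⁆, ⁅x.2, y.2⁆)
  add_bracket x y z := Prod.ext_iff.2
    ⟨LeibnizAlgebra.add_bracket x.1 y.1 z.1, LeibnizAlgebra.add_bracket x.2 y.2 z.2⟩
  bracket_add x y z := Prod.ext_iff.2
    ⟨LeibnizAlgebra.bracket_add x.1 y.1 z.1, LeibnizAlgebra.bracket_add x.2 y.2 z.2⟩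
  smul_bracket c x y := Prod.ext_iff.2
    ⟨LeibnizAlgebra.smul_bracket c x.1 y.1, LeibnizAlgebra.smul_bracket c x.2 y.2⟩
  bracket_smul c x y := Prod.ext_iff.2
    ⟨LeibnizAlgebra.bracket_smul c x.1 y.1, LeibnizAlgebra.bracket_smul c x.2 y.2⟩
  leibniz x y z := Prod.ext_iff.2
    ⟨LeibnizAlgebra.leibniz x.1 y.1 z.1, LeibnizAlgebra.leibniz x.2 y.2 z.2⟩

/-- The direct sum of countably many copies of a Leibniz algebra `H`
(finitely supported sequences), with componentwise bracket. -/
noncomputable instance finsuppLeibniz (H : Type v) [AddCommGroup H] [Module K H]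
    [LeibnizAlgebra K H] : LeibnizAlgebra K (ℕ →₀ H) where
  bracket f h := Finsupp.zipWith (fun a b : H => ⁅a, b⁆) (zero_bracket K H 0) f h
  add_bracket f f' h := by
    ext i
    simp only [Finsupp.zipWith_apply, Finsupp.add_apply]
    exact LeibnizAlgebra.add_bracket (f i) (f' i) (h i)
  bracket_add f h h' := by
    ext i
    simp only [Finsupp.zipWith_apply, Finsupp.add_apply]
    exact LeibnizAlgebra.bracket_add (f i) (h i) (h' i)
  smul_bracket c f h := by
    ext i
    simp only [Finsupp.zipWith_apply, Finsupp.smul_apply]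
    exact LeibnizAlgebra.smul_bracket c (f i) (h i)
  bracket_smul c f h := by
    ext i
    simp only [Finsupp.zipWith_apply, Finsupp.smul_apply]
    exact LeibnizAlgebra.bracket_smul c (f i) (h i)
  leibniz f h k := by
    ext i
    simp only [Finsupp.zipWith_apply, Finsupp.add_apply]
    exact LeibnizAlgebra.leibniz (f i) (h i) (k i)

end Constructions

end Leibniz

open Leibniz

section Aux

variable {K : Type u} {g : Type v} [Field K] [AddCommGroup g] [Module K g] [LeibnizAlgebra K g]

lemma bk_le' {A B C : Submodule K g} (h : ∀ a ∈ A, ∀ b ∈ B, ⁅a, b⁆ ∈ C) :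
    bk K g A B ≤ C := by
  apply Submodule.span_le.2
  rintro z ⟨a, ha, b, hb, rfl⟩
  exact h a ha b hb

lemma bk_mono' {A A' B B' : Submodule K g} (hA : A ≤ A') (hB : B ≤ B') :
    bk K g A B ≤ bk K g A' B' := by
  apply Submodule.span_mono
  rintro z ⟨a, ha, b, hb, rfl⟩
  exact ⟨a, hA ha, b, hB hb, rfl⟩

lemma derived_succ_le' (n : ℕ) : derived K g (n + 1) ≤ derived K g n := by
  induction n with
  | zero => exact le_top
  | succ n ih => exact bk_mono' ih ih

lemma derived_antitone' {k m : ℕ} (h : k ≤ m) : derived K g m ≤ derived K g k := by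
  induction h with
  | refl => exact le_rfl
  | step _ ih => exact (derived_succ_le' _).trans ih

lemma derived_map_le' (I : Submodule K g) (hI : IsIdeal K g I) (n : ℕ) :
    Submodule.map I.mkQ (derived K g n) ≤
      @derived K (g ⧸ I) _ _ _ (quotLeibniz I hI) n := by
  letI := quotLeibniz I hI
  induction n with
  | zero => exact le_top
  | succ n ih =>
    show Submodule.map I.mkQ (bk K g (derived K g n) (derived K g n)) ≤
      bk K (g ⧸ I) (derived K (g ⧸ I) n) (derived K (g ⧸ I) n)
    rw [bk, Submodule.map_span]
    apply Submodule.span_le.2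
    rintro z ⟨w, ⟨a, ha, b, hb, rfl⟩, rfl⟩
    apply Submodule.subset_span
    exact ⟨I.mkQ a, ih (Submodule.mem_map_of_mem ha),
      I.mkQ b, ih (Submodule.mem_map_of_mem hb), rfl⟩

lemma inter_cases' (I : Submodule K g) (hI : IsIdeal K g I)
    (hsimple : @IsSimpleAlg K I _ _ _ (idealLeibniz I hI))
    (J : Submodule K g) (hJ : IsIdeal K g J) :
    I ≤ J ∨ ∀ x ∈ J, x ∈ I → x = 0 := by
  letI := idealLeibniz I hI
  set I' : Submodule K I := J.comap I.subtype with hI'def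
  have hideal : IsIdeal K I I' := by
    intro x a ha
    have ha' : (a : g) ∈ J := ha
    exact ⟨(hJ (x : g) (a : g) ha').1, (hJ (x : g) (a : g) ha').2⟩
  rcases hsimple.2 I' hideal with h | h
  · right
    intro x hxJ hxI
    have : (⟨x, hxI⟩ : I) ∈ I' := hxJ
    rw [h, Submodule.mem_bot] at this
    exact congrArg Subtype.val this
  · left
    intro x hx
    have : (⟨x, hx⟩ : I) ∈ I' := h ▸ Submodule.mem_top
    exact this

end Aux

/-- If the ideal `I` is simple (as a Leibniz algebra) and `g/I` is solvable, then `g` is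
quasi-Artinian. -/
theorem quasiArtinian_of_ideal_simple_quotient_solvable (K : Type u) (g : Type v) [Field K] [AddCommGroup g] [Module K g]
    [LeibnizAlgebra K g]
    (I : Submodule K g) (hI : IsIdeal K g I)
    (hsimple : @IsSimpleAlg K I _ _ _ (idealLeibniz I hI))
    (hsolv : @IsSolvable K (g ⧸ I) _ _ _ (quotLeibniz I hI)) :
    QuasiArtinian K g := by
  intro J hJideal hJdesc
  obtain ⟨k, hk⟩ := hsolv
  have hgk : derived K g k ≤ I := by
    intro x hx
    have h1 := derived_map_le' I hI k (Submodule.mem_map_of_mem hx)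
    rw [hk, Submodule.mem_bot] at h1
    have : x ∈ LinearMap.ker I.mkQ := h1
    rwa [Submodule.ker_mkQ] at this
  have hmono : ∀ {a b : ℕ}, a ≤ b → J b ≤ J a := by
    intro a b h
    induction h with
    | refl => exact le_rfl
    | step _ ih => exact (hJdesc _).trans ih
  by_cases hcase : ∀ n, I ≤ J n
  · refine ⟨k, fun n => ⟨?_, ?_⟩⟩
    · exact bk_le' fun a ha b hb => (hJideal n b a (hcase n (hgk ha))).2
    · exact bk_le' fun b hb a ha => (hJideal n b a (hcase n (hgk ha))).1
  · push_neg at hcase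
    obtain ⟨n₀, hn₀⟩ := hcase
    have hzero : ∀ x ∈ J n₀, x ∈ I → x = 0 := by
      rcases inter_cases' I hI hsimple (J n₀) (hJideal n₀) with h | h
      · exact absurd h hn₀
      · exact h
    refine ⟨max k n₀, fun n => ⟨?_, ?_⟩⟩
    · refine bk_le' fun a ha b hb => ?_
      have haI : a ∈ I := hgk (derived_antitone' (le_max_left k n₀) ha)
      have hb0 : b ∈ J n₀ := hmono (le_max_right k n₀) hb
      have h1 : ⁅a, b⁆ ∈ J n₀ := (hJideal n₀ a b hb0).1
      have h2 : ⁅a, b⁆ ∈ I := (hI b a haI).2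
      rw [hzero _ h1 h2]
      exact (J n).zero_mem
    · refine bk_le' fun b hb a ha => ?_
      have haI : a ∈ I := hgk (derived_antitone' (le_max_left k n₀) ha)
      have hb0 : b ∈ J n₀ := hmono (le_max_right k n₀) hb
      have h1 : ⁅b, a⁆ ∈ J n₀ := (hJideal n₀ a b hb0).2
      have h2 : ⁅b, a⁆ ∈ I := (hI b a haI).1
      rw [hzero _ h1 h2]
      exact (J n).zero_mem
end

section
/- Let I be a two-sided ideal of a Leibniz algebra g. If I is simple (as a Leibniz algebra) and the quotient g/I is abelian, then g is quasi-Artinian. -/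
universe u v

open Leibniz

/-- If the ideal `I` is simple (as a Leibniz algebra) and `g/I` is abelian, then `g` is
quasi-Artinian. -/
theorem quasiArtinian_of_ideal_simple_quotient_abelian (K : Type u) (g : Type v) [Field K] [AddCommGroup g] [Module K g]
    [LeibnizAlgebra K g]
    (I : Submodule K g) (hI : IsIdeal K g I)
    (hsimple : @IsSimpleAlg K I _ _ _ (idealLeibniz I hI))
    (hab : @IsAbelian K (g ⧸ I) _ _ _ (quotLeibniz I hI)) :
    QuasiArtinian K g := by
  classical
  intro J hJideal hJchain
  -- [g,g] ≤ I since g/I is abelian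
  have hd1 : derived K g 1 ≤ I := by
    rw [show derived K g 1 = bk K g ⊤ ⊤ from rfl]
    refine Submodule.span_le.2 ?_
    rintro z ⟨a, -, b, -, rfl⟩
    have h0 := hab (Submodule.Quotient.mk a) (Submodule.Quotient.mk b)
    have h0' : (Submodule.Quotient.mk ⁅a, b⁆ : g ⧸ I) = 0 := h0
    exact (Submodule.Quotient.mk_eq_zero I).1 h0'
  -- derived g (n+1) ≤ I
  have hdsucc : ∀ n : ℕ, derived K g (n + 1) ≤ I := by
    intro n
    refine le_trans ?_ hd1
    show bk K g (derived K g n) (derived K g n) ≤ bk K g ⊤ ⊤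
    refine Submodule.span_mono ?_
    rintro z ⟨a, -, b, -, rfl⟩
    exact ⟨a, trivial, b, trivial, rfl⟩
  -- J n ⊓ I gives an ideal of I; by simplicity it is ⊥ or ⊤
  have hcases : ∀ n : ℕ, (I ⊓ J n = ⊥) ∨ I ≤ J n := by
    intro n
    set S : Submodule K I := (J n).comap I.subtype with hS
    have hSideal : @IsIdeal K I _ _ _ (idealLeibniz I hI) S := by
      intro x a ha
      constructor
      · show ⁅(x : g), (a : g)⁆ ∈ J n
        exact (hJideal n (x : g) (a : g) ha).1
      · show ⁅(a : g), (x : g)⁆ ∈ J n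
        exact (hJideal n (x : g) (a : g) ha).2
    rcases hsimple.2 S hSideal with hbot | htop
    · left
      refine le_antisymm ?_ bot_le
      rintro x ⟨hxI, hxJ⟩
      have : (⟨x, hxI⟩ : I) ∈ S := hxJ
      rw [hbot] at this
      simpa using congrArg Subtype.val this
    · right
      intro x hx
      have : (⟨x, hx⟩ : I) ∈ S := htop ▸ Submodule.mem_top
      exact this
  by_cases hall : ∀ n : ℕ, I ≤ J n
  · -- all J n contain I; take m = 1
    refine ⟨1, fun n => ?_⟩
    constructor
    · refine Submodule.span_le.2 ?_
      rintro z ⟨a, ha, b, hb, rfl⟩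
      exact hall n ((hI b a (hdsucc 0 ha)).2)
    · refine Submodule.span_le.2 ?_
      rintro z ⟨a, ha, b, hb, rfl⟩
      exact hall n ((hI a b (hdsucc 0 hb)).1)
  · push_neg at hall
    obtain ⟨m₀, hm₀⟩ := hall
    have hbot : I ⊓ J m₀ = ⊥ := (hcases m₀).resolve_right hm₀
    refine ⟨m₀ + 1, fun n => ?_⟩
    have hJle : J (m₀ + 1) ≤ J m₀ := hJchain m₀
    constructor
    · refine Submodule.span_le.2 ?_
      rintro z ⟨a, ha, b, hb, rfl⟩
      have haI : a ∈ I := hdsucc m₀ ha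
      have h1 : ⁅a, b⁆ ∈ I := (hI b a haI).2
      have h2 : ⁅a, b⁆ ∈ J m₀ := (hJideal m₀ a b (hJle hb)).1
      have : ⁅a, b⁆ ∈ I ⊓ J m₀ := ⟨h1, h2⟩
      rw [hbot] at this
      simp only [Submodule.mem_bot] at this
      rw [this]
      exact (J n).zero_mem
    · refine Submodule.span_le.2 ?_
      rintro z ⟨a, ha, b, hb, rfl⟩
      have hbI : b ∈ I := hdsucc m₀ hb
      have h1 : ⁅a, b⁆ ∈ I := (hI a b hbI).1
      have h2 : ⁅a, b⁆ ∈ J m₀ := (hJideal m₀ b a (hJle ha)).2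
      have : ⁅a, b⁆ ∈ I ⊓ J m₀ := ⟨h1, h2⟩
      rw [hbot] at this
      simp only [Submodule.mem_bot] at this
      rw [this]
      exact (J n).zero_mem
end

section
/- A quasi-Artinian Leibniz algebra g is Artinian if and only if for every two-sided ideal J of g the quotient g/J satisfies the minimal condition on abelian ideals. Equivalently, a Leibniz algebra g is Artinian if and only if g is quasi-Artinian and every quotient of g satisfies the minimal condition on abelian ideals. -/
universe u v

open Leibniz

namespace LeibnizAux

open Leibniz

variable (K : Type u) (g : Type v) [Field K] [AddCommGroup g] [Module K g] [LeibnizAlgebra K g]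

lemma bk_mono {A A' B B' : Submodule K g} (hA : A ≤ A') (hB : B ≤ B') :
    bk K g A B ≤ bk K g A' B' :=
  Submodule.span_mono (by rintro z ⟨a, ha, b, hb, rfl⟩; exact ⟨a, hA ha, b, hB hb, rfl⟩)

lemma bk_le_right {A B : Submodule K g} (hB : IsIdeal K g B) : bk K g A B ≤ B := by
  rw [Leibniz.bk, Submodule.span_le]
  rintro z ⟨a, _, b, hb, rfl⟩
  exact (hB a b hb).1

lemma sup_ideal {A B : Submodule K g} (hA : IsIdeal K g A) (hB : IsIdeal K g B) :
    IsIdeal K g (A ⊔ B) := by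
  intro x a ha
  obtain ⟨u, hu, v, hv, rfl⟩ := Submodule.mem_sup.mp ha
  constructor
  · rw [LeibnizAlgebra.bracket_add]
    exact add_mem (Submodule.mem_sup_left (hA x u hu).1) (Submodule.mem_sup_right (hB x v hv).1)
  · rw [LeibnizAlgebra.add_bracket]
    exact add_mem (Submodule.mem_sup_left (hA x u hu).2) (Submodule.mem_sup_right (hB x v hv).2)

lemma bk_self_ideal {A : Submodule K g} (hA : IsIdeal K g A) : IsIdeal K g (bk K g A A) := by
  have hleft : ∀ x : g, ∀ z ∈ bk K g A A, ⁅x, z⁆ ∈ bk K g A A := by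
    intro x z hz
    induction hz using Submodule.span_induction with
    | mem w hw =>
      obtain ⟨a, ha, b, hb, rfl⟩ := hw
      rw [LeibnizAlgebra.leibniz]
      exact add_mem (Submodule.subset_span ⟨⁅x, a⁆, (hA x a ha).1, b, hb, rfl⟩)
        (Submodule.subset_span ⟨a, ha, ⁅x, b⁆, (hA x b hb).1, rfl⟩)
    | zero => rw [bracket_zero K]; exact zero_mem _
    | add u v _ _ hu hv => rw [LeibnizAlgebra.bracket_add]; exact add_mem hu hv
    | smul c u _ hu => rw [LeibnizAlgebra.bracket_smul]; exact Submodule.smul_mem _ c hu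
  have hright : ∀ x : g, ∀ z ∈ bk K g A A, ⁅z, x⁆ ∈ bk K g A A := by
    intro x z hz
    induction hz using Submodule.span_induction with
    | mem w hw =>
      obtain ⟨a, ha, b, hb, rfl⟩ := hw
      have key : ⁅(⁅a, b⁆ : g), x⁆ = ⁅a, ⁅b, x⁆⁆ - ⁅b, ⁅a, x⁆⁆ := by
        rw [LeibnizAlgebra.leibniz a b x]; abel
      rw [key]
      exact sub_mem (Submodule.subset_span ⟨a, ha, ⁅b, x⁆, (hA x b hb).2, rfl⟩)
        (Submodule.subset_span ⟨b, hb, ⁅a, x⁆, (hA x a ha).2, rfl⟩)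
    | zero => rw [zero_bracket K]; exact zero_mem _
    | add u v _ _ hu hv => rw [LeibnizAlgebra.add_bracket]; exact add_mem hu hv
    | smul c u _ hu => rw [LeibnizAlgebra.smul_bracket]; exact Submodule.smul_mem _ c hu
  exact fun x a ha => ⟨hleft x a ha, hright x a ha⟩

lemma bk_sup_le {A D : Submodule K g} (hD : IsIdeal K g D) :
    bk K g (A ⊔ D) (A ⊔ D) ≤ bk K g A A ⊔ D := by
  rw [Leibniz.bk, Submodule.span_le]
  rintro z ⟨x, hx, y, hy, rfl⟩
  obtain ⟨a, ha, d, hd, rfl⟩ := Submodule.mem_sup.mp hx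
  obtain ⟨a', ha', d', hd', rfl⟩ := Submodule.mem_sup.mp hy
  have key : ⁅a + d, a' + d'⁆ = ⁅a, a'⁆ + (⁅a, d'⁆ + ⁅d, a' + d'⁆) := by
    rw [LeibnizAlgebra.add_bracket, LeibnizAlgebra.bracket_add]; abel
  rw [key]
  exact add_mem (Submodule.mem_sup_left (Submodule.subset_span ⟨a, ha, a', ha', rfl⟩))
    (Submodule.mem_sup_right (add_mem (hD a d' hd').1 (hD (a' + d') d hd).2))

lemma subDerived_ideal {I : Submodule K g} (hI : IsIdeal K g I) :
    ∀ k, IsIdeal K g (subDerived K g I k)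
  | 0 => hI
  | k + 1 => bk_self_ideal K g (subDerived_ideal hI k)

lemma subDerived_succ_le {I : Submodule K g} (hI : IsIdeal K g I) (k : ℕ) :
    subDerived K g I (k + 1) ≤ subDerived K g I k :=
  bk_le_right K g (subDerived_ideal K g hI k)

lemma subDerived_le_self {I : Submodule K g} (hI : IsIdeal K g I) :
    ∀ k, subDerived K g I k ≤ I
  | 0 => le_rfl
  | k + 1 => (subDerived_succ_le K g hI k).trans (subDerived_le_self hI k)

lemma subDerived_mono {I I' : Submodule K g} (h : I ≤ I') :
    ∀ k, subDerived K g I k ≤ subDerived K g I' k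
  | 0 => h
  | k + 1 => bk_mono K g (subDerived_mono h k) (subDerived_mono h k)

lemma chain_antitone (I : ℕ → Submodule K g) (h : ∀ n, I (n + 1) ≤ I n) :
    ∀ a b : ℕ, a ≤ b → I b ≤ I a := by
  intro a b hab
  induction hab with
  | refl => exact le_rfl
  | step _ ih => exact (h _).trans ih

lemma minAb_transfer {J : Submodule K g} (hJ : IsIdeal K g J)
    (hmin : @MinOnAbelianIdeals K (g ⧸ J) _ _ _ (quotLeibniz J hJ))
    (A : ℕ → Submodule K g) (hAid : ∀ n, IsIdeal K g (A n))
    (hdesc : ∀ n, A (n + 1) ≤ A n) (hJle : ∀ n, J ≤ A n)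
    (hab : ∀ n, bk K g (A n) (A n) ≤ J) :
    ∃ q, ∀ n, q ≤ n → A n = A q := by
  letI : LeibnizAlgebra K (g ⧸ J) := quotLeibniz J hJ
  have habid : ∀ n, IsAbelianIdeal K (g ⧸ J) ((A n).map J.mkQ) := by
    intro n
    constructor
    · intro X Y hY
      obtain ⟨a, haA, rfl⟩ := Submodule.mem_map.mp hY
      obtain ⟨x, rfl⟩ := J.mkQ_surjective X
      exact ⟨⟨⁅x, a⁆, (hAid n x a haA).1, rfl⟩, ⟨⁅a, x⁆, (hAid n x a haA).2, rfl⟩⟩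
    · intro X hX Y hY
      obtain ⟨x, hx, rfl⟩ := Submodule.mem_map.mp hX
      obtain ⟨y, hy, rfl⟩ := Submodule.mem_map.mp hY
      have hxy : ⁅x, y⁆ ∈ J := hab n (Submodule.subset_span ⟨x, hx, y, hy, rfl⟩)
      show Submodule.Quotient.mk ⁅x, y⁆ = (0 : g ⧸ J)
      exact (Submodule.Quotient.mk_eq_zero J).2 hxy
  obtain ⟨q, hq⟩ := hmin (fun n => (A n).map J.mkQ) habid
    (fun n => Submodule.map_mono (hdesc n))
  have hcm : ∀ n, A n = Submodule.comap J.mkQ ((A n).map J.mkQ) := by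
    intro n
    rw [Submodule.comap_map_eq, Submodule.ker_mkQ, sup_eq_left.mpr (hJle n)]
  exact ⟨q, fun n hn => by rw [hcm n, hcm q, hq n hn]⟩

lemma iInf_ideal (I : ℕ → Submodule K g) (hI : ∀ n, IsIdeal K g (I n)) :
    IsIdeal K g (⨅ n, I n) := by
  intro x a ha
  rw [Submodule.mem_iInf] at ha
  exact ⟨Submodule.mem_iInf _ |>.2 fun n => (hI n x a (ha n)).1,
    Submodule.mem_iInf _ |>.2 fun n => (hI n x a (ha n)).2⟩

end LeibnizAux

open LeibnizAux
/-- A Leibniz algebra is Artinian iff it is quasi-Artinian and every quotient satisfies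
the minimal condition on abelian ideals. -/
theorem artinian_iff_quasiArtinian_and_quotients_minOnAbelian (K : Type u) (g : Type v) [Field K] [AddCommGroup g] [Module K g]
    [LeibnizAlgebra K g] :
    ArtinianAlg K g ↔
      (QuasiArtinian K g ∧
        ∀ (J : Submodule K g) (hJ : IsIdeal K g J),
          @MinOnAbelianIdeals K (g ⧸ J) _ _ _ (quotLeibniz J hJ)) := by
  constructor
  · intro hart
    constructor
    · -- Artinian → quasi-Artinian
      intro I hIid hIdesc
      obtain ⟨m, hm⟩ := hart I hIid hIdesc
      refine ⟨m, fun n => ?_⟩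
      have hmn : I m ≤ I n := by
        rcases le_total m n with h | h
        · exact (hm n h).ge
        · exact chain_antitone K g I hIdesc n m h
      refine ⟨(bk_le_right K g (hIid m)).trans hmn, le_trans ?_ hmn⟩
      rw [Leibniz.bk, Submodule.span_le]
      rintro z ⟨a, ha, b, _, rfl⟩
      exact (hIid m b a ha).2
    · -- Artinian → quotients satisfy Min-ab
      intro J hJ
      letI : LeibnizAlgebra K (g ⧸ J) := quotLeibniz J hJ
      intro Ab habid hdesc
      set A : ℕ → Submodule K g := fun n => (Ab n).comap J.mkQ with hA
      have hAid : ∀ n, IsIdeal K g (A n) := by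
        intro n x a ha
        have h := (habid n).1 (J.mkQ x) (J.mkQ a) ha
        exact ⟨h.1, h.2⟩
      obtain ⟨m, hm⟩ := hart A hAid (fun n => Submodule.comap_mono (hdesc n))
      refine ⟨m, fun n hn => ?_⟩
      have hmc : ∀ k, Ab k = (A k).map J.mkQ := fun k =>
        (Submodule.map_comap_eq_of_surjective (Submodule.mkQ_surjective J) (Ab k)).symm
      rw [hmc n, hmc m, hm n hn]
  · -- converse
    rintro ⟨hqa, hmin⟩
    intro I hIid hIdesc
    obtain ⟨m, hm⟩ := hqa I hIid hIdesc
    have hanti := chain_antitone K g I hIdesc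
    set D : Submodule K g := ⨅ n, I n with hD
    have hDid : IsIdeal K g D := iInf_ideal K g I hIid
    have hDle : ∀ n, D ≤ I n := fun n => iInf_le _ n
    have hkey : subDerived K g (I m) (m + 1) ≤ D := by
      refine le_iInf fun n => le_trans ?_ (hm n).2
      show bk K g (subDerived K g (I m) m) (subDerived K g (I m) m) ≤
        bk K g (I m) (derived K g m)
      exact bk_mono K g (subDerived_le_self K g (hIid m) m)
        (subDerived_mono K g le_top m)
    set J' : ℕ → Submodule K g := fun n => I (m + n) with hJ'
    have hJ'id : ∀ n, IsIdeal K g (J' n) := fun n => hIid (m + n)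
    have hJ'anti : ∀ a b : ℕ, a ≤ b → J' b ≤ J' a := fun a b h =>
      hanti (m + a) (m + b) (by omega)
    have hDJ' : ∀ n, D ≤ J' n := fun n => hDle (m + n)
    set U : ℕ → ℕ → Submodule K g := fun k n => subDerived K g (J' n) k ⊔ D with hU
    have base : ∃ q, ∀ n, q ≤ n → U (m + 1) n = U (m + 1) q := by
      refine ⟨0, fun n _ => ?_⟩
      have h1 : ∀ p, subDerived K g (J' p) (m + 1) ≤ D := fun p =>
        (subDerived_mono K g (hJ'anti 0 p (Nat.zero_le p)) (m + 1)).trans hkey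
      show subDerived K g (J' n) (m + 1) ⊔ D = subDerived K g (J' 0) (m + 1) ⊔ D
      rw [sup_eq_right.mpr (h1 n), sup_eq_right.mpr (h1 0)]
    have step : ∀ k : ℕ, (∃ q, ∀ n, q ≤ n → U (k + 1) n = U (k + 1) q) →
        (∃ q, ∀ n, q ≤ n → U k n = U k q) := by
      intro k ⟨q, hq⟩
      set J₀ : Submodule K g := U (k + 1) q with hJ₀
      have hJ₀id : IsIdeal K g J₀ :=
        sup_ideal K g (subDerived_ideal K g (hJ'id q) (k + 1)) hDid
      have hstab : ∃ r, ∀ n, r ≤ n → U k (q + n) = U k (q + r) := by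
        refine minAb_transfer K g hJ₀id (hmin J₀ hJ₀id) (fun n => U k (q + n))
          (fun n => sup_ideal K g (subDerived_ideal K g (hJ'id (q + n)) k) hDid)
          (fun n => sup_le_sup_right
            (subDerived_mono K g (hJ'anti (q + n) (q + (n + 1)) (by omega)) k) D)
          (fun n => ?_) (fun n => ?_)
        · -- J₀ ≤ U k (q + n)
          exact le_trans (le_of_eq (hq (q + n) (by omega)).symm)
            (sup_le_sup_right (subDerived_succ_le K g (hJ'id (q + n)) k) D)
        · -- bk (U k (q+n)) (U k (q+n)) ≤ J₀
          exact (bk_sup_le K g hDid).trans (le_of_eq (hq (q + n) (by omega)))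
      obtain ⟨r, hr⟩ := hstab
      refine ⟨q + r, fun n hn => ?_⟩
      have h1 : n = q + (n - q) := by omega
      rw [h1]
      exact hr (n - q) (by omega)
    have hall : ∀ t : ℕ, ∃ q, ∀ n, q ≤ n → U (m + 1 - t) n = U (m + 1 - t) q := by
      intro t
      induction t with
      | zero => simpa using base
      | succ t ih =>
        rcases Nat.lt_or_ge t (m + 1) with h | h
        · have he : m + 1 - t = (m + 1 - (t + 1)) + 1 := by omega
          rw [he] at ih
          exact step _ ih
        · have he : m + 1 - (t + 1) = m + 1 - t := by omega
          rw [he]; exact ih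
    obtain ⟨q, hq⟩ : ∃ q, ∀ n, q ≤ n → U 0 n = U 0 q := by
      have h := hall (m + 1)
      simpa using h
    refine ⟨m + q, fun n hn => ?_⟩
    have h1 : n = m + (n - m) := by omega
    have h2 : U 0 (n - m) = U 0 q := hq (n - m) (by omega)
    have h3 : ∀ p, U 0 p = J' p := fun p => sup_eq_left.mpr (hDJ' p)
    rw [h3, h3] at h2
    rw [h1]
    exact h2
end

section
/- Let g be a Leibniz algebra over a field satisfying the ascending chain condition on ideals of ideals, i.e., for every two-sided ideal K of g, every ascending chain of two-sided ideals of K (K regarded as a Leibniz algebra) terminates. Then every solvable two-sided ideal of g is finite-dimensional (in particular, finitely generated). -/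
universe u v

open Leibniz

section Aux

variable {K : Type u} {g : Type v} [Field K] [AddCommGroup g] [Module K g] [LeibnizAlgebra K g]

lemma bk_le_of_ideal {I : Submodule K g} (hI : IsIdeal K g I) : bk K g I I ≤ I := by
  refine Submodule.span_le.2 ?_
  rintro z ⟨a, ha, b, hb, rfl⟩
  exact (hI a b hb).1

lemma mem_bk_of_mem {I : Submodule K g} {a b : g} (ha : a ∈ I) (hb : b ∈ I) :
    ⁅a, b⁆ ∈ bk K g I I :=
  Submodule.subset_span ⟨a, ha, b, hb, rfl⟩

lemma isIdeal_bk {I : Submodule K g} (hI : IsIdeal K g I) : IsIdeal K g (bk K g I I) := by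
  intro x z hz
  induction hz using Submodule.span_induction with
  | mem z hz =>
    obtain ⟨a, ha, b, hb, rfl⟩ := hz
    constructor
    · rw [LeibnizAlgebra.leibniz]
      exact (bk K g I I).add_mem (mem_bk_of_mem (hI x a ha).1 hb)
        (mem_bk_of_mem ha (hI x b hb).1)
    · have h := LeibnizAlgebra.leibniz (K := K) a b x
      have : ⁅⁅a, b⁆, x⁆ = ⁅a, ⁅b, x⁆⁆ - ⁅b, ⁅a, x⁆⁆ := by rw [h]; abel
      rw [this]
      exact (bk K g I I).sub_mem (mem_bk_of_mem ha (hI x b hb).2)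
        (mem_bk_of_mem hb (hI x a ha).2)
  | zero =>
    constructor
    · rw [bracket_zero K g]; exact (bk K g I I).zero_mem
    · rw [zero_bracket K g]; exact (bk K g I I).zero_mem
  | add a b _ _ iha ihb =>
    constructor
    · rw [LeibnizAlgebra.bracket_add]; exact (bk K g I I).add_mem iha.1 ihb.1
    · rw [LeibnizAlgebra.add_bracket]; exact (bk K g I I).add_mem iha.2 ihb.2
  | smul c a _ iha =>
    constructor
    · rw [LeibnizAlgebra.bracket_smul]; exact (bk K g I I).smul_mem c iha.1
    · rw [LeibnizAlgebra.smul_bracket]; exact (bk K g I I).smul_mem c iha.2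

lemma subDerived_succ_eq (I : Submodule K g) (n : ℕ) :
    subDerived K g I (n + 1) = subDerived K g (bk K g I I) n := by
  induction n with
  | zero => rfl
  | succ n ih => show bk K g _ _ = bk K g _ _; rw [ih]

end Aux

/-- If `g` satisfies the ascending chain condition on ideals of ideals, then every
solvable two-sided ideal of `g` is finite-dimensional. -/
theorem solvable_ideal_finiteDimensional_of_acc_ideals_of_ideals (K : Type u) (g : Type v) [Field K] [AddCommGroup g] [Module K g]
    [LeibnizAlgebra K g]
    (hacc : ∀ A : Submodule K g, IsIdeal K g A →
      ∀ J : ℕ → Submodule K g, (∀ n, IsIdealIn K g A (J n)) → (∀ n, J n ≤ J (n + 1)) →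
        ∃ m : ℕ, ∀ n : ℕ, m ≤ n → J n = J m)
    (I : Submodule K g) (hI : IsIdeal K g I)
    (hsolv : ∃ n : ℕ, subDerived K g I n = ⊥) :
    FiniteDimensional K I := by
  obtain ⟨n, hn⟩ := hsolv
  induction n generalizing I with
  | zero =>
    have : I = ⊥ := hn
    subst this
    infer_instance
  | succ n ih =>
    set B := bk K g I I with hBdef
    have hB : IsIdeal K g B := isIdeal_bk hI
    have hBI : B ≤ I := bk_le_of_ideal hI
    have hBsolv : subDerived K g B n = ⊥ := by
      rw [← subDerived_succ_eq]; exact hn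
    have hBfin : FiniteDimensional K B := ih B hB hBsolv
    -- the quotient I / B is Noetherian, hence finite-dimensional
    set Bc : Submodule K I := B.comap I.subtype with hBc
    have hquot : IsNoetherian K (I ⧸ Bc) := by
      rw [← monotone_stabilizes_iff_noetherian]
      intro f
      set J : ℕ → Submodule K g :=
        fun n => Submodule.map I.subtype (Submodule.comap Bc.mkQ (f n)) with hJ
      have hJI : ∀ n, J n ≤ I := by
        rintro n x ⟨y, hy, rfl⟩
        exact y.2
      have hBJ : ∀ n, B ≤ J n := by
        intro n b hb
        refine ⟨⟨b, hBI hb⟩, ?_, rfl⟩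
        have : (⟨b, hBI hb⟩ : I) ∈ Bc := by simpa [hBc]
        show Bc.mkQ _ ∈ f n
        have h0 : Bc.mkQ (⟨b, hBI hb⟩ : I) = 0 := (Submodule.Quotient.mk_eq_zero Bc).2 this
        rw [h0]; exact (f n).zero_mem
      have hJideal : ∀ n, IsIdealIn K g I (J n) := by
        intro n
        refine ⟨hJI n, fun x hx a ha => ?_⟩
        exact ⟨hBJ n (mem_bk_of_mem hx (hJI n ha)), hBJ n (mem_bk_of_mem (hJI n ha) hx)⟩
      have hJmono : ∀ n, J n ≤ J (n + 1) := fun n =>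
        Submodule.map_mono (Submodule.comap_mono (f.monotone (Nat.le_succ n)))
      obtain ⟨m, hm⟩ := hacc I hI J hJideal hJmono
      refine ⟨m, fun n hn' => ?_⟩
      have hJeq := hm n hn'
      have hinj : Function.Injective (Submodule.map I.subtype) :=
        Submodule.map_injective_of_injective I.injective_subtype
      have hcomap : Submodule.comap Bc.mkQ (f n) = Submodule.comap Bc.mkQ (f m) :=
        hinj hJeq
      have hsurj : Function.Surjective Bc.mkQ := Submodule.mkQ_surjective Bc
      have := congrArg (Submodule.map Bc.mkQ) hcomap
      rw [Submodule.map_comap_eq_of_surjective hsurj,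
        Submodule.map_comap_eq_of_surjective hsurj] at this
      exact this.symm
    have hBcfin : IsNoetherian K Bc := by
      have e : Bc ≃ₗ[K] B := Submodule.comapSubtypeEquivOfLe hBI
      have : IsNoetherian K B := by
        rw [IsNoetherian.iff_fg]; exact hBfin
      exact isNoetherian_of_linearEquiv e.symm
    have : IsNoetherian K I := (isNoetherian_iff_submodule_quotient Bc).2 ⟨hBcfin, hquot⟩
    exact IsNoetherian.iff_fg.mp this
end
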